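/- arXiv:1406.6807 — 2 statements merged into one kernel-verified Lean document; each statement's English description precedes it below -/
import Mathlib

section
/- For 0 < σ < 1 and each k ∈ ℤⁿ, the Fourier transform of the function x ↦ (1+|x|²)^{-(n+2σ)/2} evaluated at k equals c_{n,σ} |k|^{2σ} ∫_0^∞ e^{-|k|²/(4r)} e^{-r} r^{-(1+σ)} dr for an explicit positive constant c_{n,σ} = ((4π)^{n/2} 4^σ Γ((n+2σ)/2))^{-1} (when k ≠ 0), via the subordination formula (1+|ξ|²)^{-s} = Γ(s)^{-1} ∫_0^∞ e^{-t} e^{-t|ξ|²} t^{s-1} dt. -/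
/-! By subordination, `(1 + |x|²)^{-s} = Γ(s)⁻¹ ∫₀^∞ t^{s-1} e^{-t} e^{-t|x|²} dt` with
`s = (n + 2σ)/2`. Inserting this into the Fourier integral and exchanging the two integrals
(absolutely convergent because `s > n/2`, which is `σ > 0`), the inner integral is the Fourier
transform of a Gaussian, `(π/t)^{n/2} e^{-|ξ|²/(4t)}`. What remains is
`Γ(s)⁻¹ π^{n/2} ∫₀^∞ e^{-|ξ|²/(4t)} e^{-t} t^{σ-1} dt`, and the substitution `t = |ξ|²/(4r)`,
which swaps the two exponential factors, turns it into
`(|ξ|²/4)^σ ∫₀^∞ e^{-|ξ|²/(4r)} e^{-r} r^{-(1+σ)} dr`. -/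

noncomputable section
open MeasureTheory Real RealInnerProductSpace

/-- The vector in `ℝⁿ` with coordinates `k i`. -/
def ivec {n : ℕ} (k : Fin n → ℤ) : EuclideanSpace ℝ (Fin n) := WithLp.toLp 2 (fun i => (k i : ℝ))

/-- The lattice point `2πk` of the lattice `2πℤⁿ`. -/
def lat {n : ℕ} (k : Fin n → ℤ) : EuclideanSpace ℝ (Fin n) := (2 * Real.pi) • ivec k

/-- The fundamental cube `Qₙ = (-π,π]ⁿ`. -/
def cube (n : ℕ) : Set (EuclideanSpace ℝ (Fin n)) :=
  WithLp.ofLp ⁻¹' (Set.univ.pi fun _ => Set.Ioc (-Real.pi) Real.pi)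

/-- The periodization `p_Σ φ (z) = Σ_{k∈ℤⁿ} φ(z+2πk)`. -/
def periodization {n : ℕ} (φ : EuclideanSpace ℝ (Fin n) → ℂ)
    (z : EuclideanSpace ℝ (Fin n)) : ℂ :=
  ∑' k : Fin n → ℤ, φ (z + lat k)

/-- The Fourier transform `φ̂(ξ) = (2π)^{-n} ∫ φ(x) e^{-i x·ξ} dx`. -/
def ft {n : ℕ} (φ : EuclideanSpace ℝ (Fin n) → ℂ) (ξ : EuclideanSpace ℝ (Fin n)) : ℂ :=
  ((2 * Real.pi) ^ n : ℂ)⁻¹ * ∫ x, φ x * Complex.exp (-Complex.I * (⟪x, ξ⟫ : ℝ))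

/-- The `k`-th Fourier coefficient `c_k(g) = (2π)^{-n} ∫_{(-π,π]ⁿ} g(z) e^{-i k·z} dz`. -/
def fourierCoeff' {n : ℕ} (g : EuclideanSpace ℝ (Fin n) → ℂ) (k : Fin n → ℤ) : ℂ :=
  ((2 * Real.pi) ^ n : ℂ)⁻¹ * ∫ z in cube n, g z * Complex.exp (-Complex.I * (⟪z, ivec k⟫ : ℝ))

open Set

theorem integral_Ioi_rpow_sub_one_mul_eq_rpow_mul (f : ℝ → ℝ) {c : ℝ} (hc : 0 < c) (σ : ℝ) :
    ∫ t in Ioi 0, f t * t ^ (σ - 1) = c ^ σ * ∫ r in Ioi 0, f (c / r) * r ^ (-(1 + σ)) := by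
  set g : ℝ → ℝ := fun u => f u⁻¹ * u ^ (-(1 + σ))
  have h_scale : ∫ r in Ioi 0, f (c / r) * r ^ (-(1 + σ)) = c ^ (-σ) * ∫ u in Ioi 0, g u := by
    have h := integral_comp_mul_left_Ioi' (fun r => f (c / r) * r ^ (-(1 + σ))) 0 hc
    rw [mul_zero] at h
    rw [← h, smul_eq_mul, ← integral_const_mul, ← integral_const_mul]
    refine setIntegral_congr_fun measurableSet_Ioi fun u (hu : 0 < u) => ?_
    simp only [g, Real.mul_rpow hc.le hu.le, div_eq_mul_inv]
    rw [Real.rpow_neg hc.le (1 + σ), Real.rpow_add hc, Real.rpow_one, Real.rpow_neg hc.le]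
    field_simp
  have h_inv : ∫ u in Ioi 0, g u = ∫ t in Ioi 0, f t * t ^ (σ - 1) := by
    rw [← integral_comp_rpow_Ioi g (neg_ne_zero.mpr one_ne_zero)]
    refine setIntegral_congr_fun measurableSet_Ioi fun t (ht : 0 < t) => ?_
    simp only [g, smul_eq_mul, abs_neg, abs_one, one_mul, Real.rpow_neg_one, inv_inv]
    rw [Real.inv_rpow ht.le, ← Real.rpow_neg ht.le, neg_neg, mul_left_comm, ← Real.rpow_add ht]
    ring_nf
  rw [h_scale, h_inv, ← mul_assoc, ← Real.rpow_add hc, add_neg_cancel, Real.rpow_zero, one_mul]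

theorem integral_exp_neg_div_mul_exp_neg_mul_rpow {a : ℝ} (ha : 0 < a) (σ : ℝ) :
    ∫ t in Ioi 0, Real.exp (-a / (4 * t)) * Real.exp (-t) * t ^ (σ - 1) =
      (a / 4) ^ σ * ∫ r in Ioi 0, Real.exp (-a / (4 * r)) * Real.exp (-r) * r ^ (-(1 + σ)) := by
  have h := integral_Ioi_rpow_sub_one_mul_eq_rpow_mul
    (fun t => Real.exp (-a / (4 * t)) * Real.exp (-t)) (div_pos ha four_pos) σ
  rw [h]
  congr 1
  refine setIntegral_congr_fun measurableSet_Ioi fun r (hr : 0 < r) => ?_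
  field_simp

theorem rpow_neg_eq_inv_Gamma_mul_integral {s u : ℝ} (hs : 0 < s) (hu : -1 < u) :
    (1 + u) ^ (-s) =
      (Real.Gamma s)⁻¹ * ∫ t in Ioi 0, t ^ (s - 1) * Real.exp (-t) * Real.exp (-t * u) := by
  have hu' : 0 < 1 + u := by linarith
  have h := Real.integral_rpow_mul_exp_neg_mul_Ioi hs hu'
  simp_rw [mul_assoc, ← Real.exp_add, show ∀ t : ℝ, -t + -t * u = -((1 + u) * t) from
    fun t => by ring, h, one_div, Real.inv_rpow hu'.le, Real.rpow_neg hu'.le]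
  field_simp [(Real.Gamma_pos_of_pos hs).ne']

theorem rpow_sub_one_mul_div_rpow {b t : ℝ} (hb : 0 ≤ b) (ht : 0 < t) (a s : ℝ) :
    t ^ (s - 1) * (b / t) ^ a = b ^ a * t ^ (s - a - 1) := by
  rw [Real.div_rpow hb ht.le, mul_div_left_comm, ← Real.rpow_sub ht, sub_right_comm]

section
variable {V : Type*} [NormedAddCommGroup V] [InnerProductSpace ℝ V]

theorem ofReal_exp_mul_cexp_inner_eq (t : ℝ) (x ξ : V) :
    (Real.exp (-t * ‖x‖ ^ 2) : ℂ) * Complex.exp (-Complex.I * (⟪x, ξ⟫ : ℝ)) =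
      Complex.exp (-(t : ℂ) * ‖x‖ ^ 2 + -Complex.I * (⟪ξ, x⟫ : ℝ)) := by
  rw [Complex.exp_add, real_inner_comm, Complex.ofReal_exp]
  push_cast
  rfl

theorem norm_cexp_neg_I_mul_ofReal (r : ℝ) : ‖Complex.exp (-Complex.I * r)‖ = 1 := by
  rw [neg_mul, ← mul_neg, ← Complex.ofReal_neg, Complex.norm_exp_I_mul_ofReal]

variable [FiniteDimensional ℝ V] [MeasurableSpace V] [BorelSpace V]

open Module

theorem integral_exp_neg_mul_sq_norm_mul_cexp_inner {t : ℝ} (ht : 0 < t) (ξ : V) :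
    ∫ x : V, (Real.exp (-t * ‖x‖ ^ 2) : ℂ) * Complex.exp (-Complex.I * (⟪x, ξ⟫ : ℝ)) =
      (((π / t) ^ ((finrank ℝ V : ℝ) / 2) * Real.exp (-‖ξ‖ ^ 2 / (4 * t)) : ℝ) : ℂ) := by
  simp_rw [ofReal_exp_mul_cexp_inner_eq]
  rw [GaussianFourier.integral_cexp_neg_mul_sq_norm_add (by simpa using ht), Complex.ofReal_mul,
    Complex.ofReal_cpow (by positivity), Complex.ofReal_exp]
  congr 1
  · push_cast; rfl
  · congr 1
    rw [neg_sq, Complex.I_sq]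
    push_cast
    ring

theorem integrable_exp_neg_mul_sq_norm_mul_cexp_inner {t : ℝ} (ht : 0 < t) (ξ : V) :
    Integrable fun x : V =>
      (Real.exp (-t * ‖x‖ ^ 2) : ℂ) * Complex.exp (-Complex.I * (⟪x, ξ⟫ : ℝ)) := by
  simp_rw [ofReal_exp_mul_cexp_inner_eq]
  exact GaussianFourier.integrable_cexp_neg_mul_sq_norm_add (by simpa using ht) _ _

theorem integrable_subordination_integrand {s : ℝ} (hs : (finrank ℝ V : ℝ) / 2 < s) (ξ : V) :
    Integrable (Function.uncurry fun (x : V) (t : ℝ) =>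
        ((t ^ (s - 1) * Real.exp (-t) : ℝ) : ℂ) *
          ((Real.exp (-t * ‖x‖ ^ 2) : ℂ) * Complex.exp (-Complex.I * (⟪x, ξ⟫ : ℝ))))
      ((volume : Measure V).prod (volume.restrict (Ioi 0))) := by
  refine (integrable_prod_iff' ?_).2 ⟨?_, ?_⟩
  · exact Measurable.aestronglyMeasurable (by fun_prop)
  · filter_upwards [ae_restrict_mem measurableSet_Ioi] with t (ht : 0 < t)
    exact (integrable_exp_neg_mul_sq_norm_mul_cexp_inner ht ξ).const_mul
      ((t ^ (s - 1) * Real.exp (-t) : ℝ) : ℂ)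
  · refine ((Real.GammaIntegral_convergent (sub_pos.2 hs)).const_mul
      (π ^ ((finrank ℝ V : ℝ) / 2))).congr ?_
    filter_upwards [ae_restrict_mem measurableSet_Ioi] with t (ht : 0 < t)
    simp only [Function.uncurry_apply_pair, norm_mul, Complex.norm_real, Real.norm_eq_abs,
      Real.abs_exp, abs_of_pos (Real.rpow_pos_of_pos ht _), norm_cexp_neg_I_mul_ofReal,
      mul_one]
    rw [integral_const_mul, GaussianFourier.integral_rexp_neg_mul_sq_norm ht, mul_right_comm,
      rpow_sub_one_mul_div_rpow Real.pi_pos.le ht]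
    ring

theorem integral_one_add_sq_norm_rpow_mul_cexp_inner {σ : ℝ} (hσ : 0 < σ) (ξ : V) :
    ∫ x : V, (((1 + ‖x‖ ^ 2) ^ (-((finrank ℝ V : ℝ) + 2 * σ) / 2) : ℝ) : ℂ) *
        Complex.exp (-Complex.I * (⟪x, ξ⟫ : ℝ)) =
      (((Real.Gamma (((finrank ℝ V : ℝ) + 2 * σ) / 2))⁻¹ * π ^ ((finrank ℝ V : ℝ) / 2) *
        ∫ t in Ioi 0, Real.exp (-‖ξ‖ ^ 2 / (4 * t)) * Real.exp (-t) * t ^ (σ - 1) : ℝ) : ℂ) := by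
  set s : ℝ := ((finrank ℝ V : ℝ) + 2 * σ) / 2 with hs_def
  have hs : (finrank ℝ V : ℝ) / 2 < s := by rw [hs_def]; linarith
  set G : V → ℝ → ℂ := fun x t => ((t ^ (s - 1) * Real.exp (-t) : ℝ) : ℂ) *
    ((Real.exp (-t * ‖x‖ ^ 2) : ℂ) * Complex.exp (-Complex.I * (⟪x, ξ⟫ : ℝ)))
  have h_subord : ∀ x : V, (((1 + ‖x‖ ^ 2) ^ (-s) : ℝ) : ℂ) *
      Complex.exp (-Complex.I * (⟪x, ξ⟫ : ℝ)) = (Real.Gamma s : ℂ)⁻¹ * ∫ t in Ioi 0, G x t := by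
    intro x
    simp only [G, ← mul_assoc, ← Complex.ofReal_mul]
    rw [integral_mul_const, integral_complex_ofReal,
      rpow_neg_eq_inv_Gamma_mul_integral (u := ‖x‖ ^ 2)
        ((by positivity : (0 : ℝ) ≤ _).trans_lt hs) (neg_one_lt_zero.trans_le (sq_nonneg _))]
    push_cast
    ring
  have h_gauss : ∀ t ∈ Ioi (0 : ℝ), ∫ x : V, G x t =
      ((π ^ ((finrank ℝ V : ℝ) / 2) *
        (Real.exp (-‖ξ‖ ^ 2 / (4 * t)) * Real.exp (-t) * t ^ (σ - 1)) : ℝ) : ℂ) := by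
    intro t (ht : 0 < t)
    rw [integral_const_mul, integral_exp_neg_mul_sq_norm_mul_cexp_inner ht, ← Complex.ofReal_mul]
    congr 1
    have h_pow := rpow_sub_one_mul_div_rpow Real.pi_pos.le ht ((finrank ℝ V : ℝ) / 2) s
    rw [show s - (finrank ℝ V : ℝ) / 2 - 1 = σ - 1 by rw [hs_def]; ring] at h_pow
    linear_combination Real.exp (-t) * Real.exp (-‖ξ‖ ^ 2 / (4 * t)) * h_pow
  calc ∫ x : V, (((1 + ‖x‖ ^ 2) ^ (-((finrank ℝ V : ℝ) + 2 * σ) / 2) : ℝ) : ℂ) *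
        Complex.exp (-Complex.I * (⟪x, ξ⟫ : ℝ))
      = (Real.Gamma s : ℂ)⁻¹ * ∫ x : V, ∫ t in Ioi 0, G x t := by
        simp_rw [neg_div, ← hs_def, h_subord, integral_const_mul]
    _ = (Real.Gamma s : ℂ)⁻¹ * ∫ t in Ioi 0, ∫ x : V, G x t := by
        rw [integral_integral_swap (integrable_subordination_integrand hs ξ)]
    _ = _ := by
        rw [setIntegral_congr_fun measurableSet_Ioi h_gauss, integral_complex_ofReal,
          integral_const_mul]
        push_cast
        ring

end

theorem ivec_ne_zero {n : ℕ} {k : Fin n → ℤ} (hk : k ≠ 0) : ivec k ≠ 0 := by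
  contrapose! hk
  ext i
  simpa [ivec] using congrArg (· i) hk

theorem fourier_transform_bessel_weight_general (n : ℕ) (σ : ℝ)
    (hσ : 0 < σ) (k : Fin n → ℤ) (hk : k ≠ 0) :
    ft (fun x => ((1 + ‖x‖ ^ 2) ^ (-((n : ℝ) + 2 * σ) / 2) : ℝ)) (ivec k) =
      ((((4 * Real.pi) ^ ((n : ℝ) / 2) * 4 ^ σ * Real.Gamma (((n : ℝ) + 2 * σ) / 2))⁻¹ *
        ‖ivec k‖ ^ (2 * σ) *
        ∫ r in Set.Ioi (0 : ℝ),
          Real.exp (-(‖ivec k‖ ^ 2) / (4 * r)) * Real.exp (-r) * r ^ (-(1 + σ)) : ℝ) : ℂ) := by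
  have hk_norm : 0 < ‖ivec k‖ := norm_pos_iff.2 (ivec_ne_zero hk)
  have h_fourier := integral_one_add_sq_norm_rpow_mul_cexp_inner
    (V := EuclideanSpace ℝ (Fin n)) hσ (ivec k)
  rw [finrank_euclideanSpace_fin] at h_fourier
  rw [ft, h_fourier, integral_exp_neg_div_mul_exp_neg_mul_rpow (pow_pos hk_norm 2)]
  have h_two_pi : (2 * π) ^ n = (4 * π) ^ ((n : ℝ) / 2) * π ^ ((n : ℝ) / 2) := by
    rw [← Real.mul_rpow (by positivity) Real.pi_pos.le, show 4 * π * π = (2 * π) ^ 2 by ring,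
      ← Real.rpow_natCast_mul (by positivity), Nat.cast_two, mul_div_cancel₀ _ two_ne_zero,
      Real.rpow_natCast]
  have h_norm_pow : (‖ivec k‖ ^ 2 / 4) ^ σ = ‖ivec k‖ ^ (2 * σ) / 4 ^ σ := by
    rw [Real.div_rpow (by positivity) zero_le_four, ← Real.rpow_natCast_mul hk_norm.le]
    norm_num
  rw [h_norm_pow, ← Complex.ofReal_ofNat, ← Complex.ofReal_mul, ← Complex.ofReal_pow,
    ← Complex.ofReal_inv, ← Complex.ofReal_mul, h_two_pi]
  congr 1
  have hπ_pow := Real.rpow_pos_of_pos Real.pi_pos ((n : ℝ) / 2)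
  field_simp

/-- for `0 < σ < 1` and `k ∈ ℤⁿ`, `k ≠ 0`, the Fourier transform
(normalized `f̂(ξ) = (2π)^{-n}∫ f e^{-ix·ξ} dx`) of `x ↦ (1+|x|²)^{-(n+2σ)/2}` at `k`
equals `c_{n,σ} |k|^{2σ} ∫_0^∞ e^{-|k|²/(4r)} e^{-r} r^{-(1+σ)} dr`, with
`c_{n,σ} = ((4π)^{n/2} 4^σ Γ((n+2σ)/2))⁻¹`. -/
theorem fourier_transform_bessel_weight (n : ℕ) (hn : 1 ≤ n) (σ : ℝ)
    (hσ : 0 < σ) (hσ1 : σ < 1) (k : Fin n → ℤ) (hk : k ≠ 0) :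
    ft (fun x => ((1 + ‖x‖ ^ 2) ^ (-((n : ℝ) + 2 * σ) / 2) : ℝ)) (ivec k) =
      ((((4 * Real.pi) ^ ((n : ℝ) / 2) * 4 ^ σ * Real.Gamma (((n : ℝ) + 2 * σ) / 2))⁻¹ *
        ‖ivec k‖ ^ (2 * σ) *
        ∫ r in Set.Ioi (0 : ℝ),
          Real.exp (-(‖ivec k‖ ^ 2) / (4 * r)) * Real.exp (-r) * r ^ (-(1 + σ)) : ℝ) : ℂ) :=
  fourier_transform_bessel_weight_general n σ hσ k hk
end
end

section
/- Let 0 < σ < 1/2, and let u : ℝⁿ → ℝ be a bounded function that is Hölder continuous of order α with 2σ < α ≤ 1. Then for every x ∈ ℝⁿ the integral ∫_{ℝⁿ} (u(x)-u(y))/|x-y|^{n+2σ} dy is absolutely convergent, and x ↦ ∫_{ℝⁿ}(u(x)-u(y))/|x-y|^{n+2σ} dy is Hölder continuous of order α - 2σ with ‖·‖-bound C(n,σ,α)·‖u‖_{C^{0,α}}. -/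
/-!
Hölder continuity and boundedness give `|u x - u y| ≤ (2B + |H|) min(1, |x - y|^α)`, so the
integrand is dominated by a radial kernel that behaves like `|z|^(α - n - 2σ)` near `0` and like
`|z|^(-n - 2σ)` at infinity, both integrable because `0 < 2σ < α`. After recentring both integrals
at `0`, the integrand of the difference at `x` and `y` is bounded by
`2H min(|x - y|^α, |z|^α) / |z|^(n + 2σ)`, and the dilation `z ↦ |x - y| z` shows that this kernel
has integral `|x - y|^(α - 2σ)` times that of `min(1, |z|^α) / |z|^(n + 2σ)`.
-/

open MeasureTheory Real Set Module

lemma integrableOn_Ioi_min_mul_rpow_rpow {c β γ : ℝ} (hc : 0 ≤ c) (hβ : β < -1) (hγ : -1 < γ) :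
    IntegrableOn (fun r : ℝ => min (c * r ^ β) (r ^ γ)) (Ioi 0) := by
  have hmeas : AEStronglyMeasurable (fun r : ℝ => min (c * r ^ β) (r ^ γ)) := by fun_prop
  have hnorm : ∀ r ∈ Ioi (0 : ℝ), ‖min (c * r ^ β) (r ^ γ)‖ = min (c * r ^ β) (r ^ γ) :=
    fun r hr => norm_of_nonneg (by have := (mem_Ioi.1 hr).le; positivity)
  rw [← Ioc_union_Ioi_eq_Ioi zero_le_one]
  refine IntegrableOn.union ?_ ?_
  · refine (intervalIntegral.intervalIntegrable_rpow' hγ (a := 0) (b := 1)).1.mono'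
      hmeas.restrict ?_
    filter_upwards [ae_restrict_mem measurableSet_Ioc] with r hr
    exact (hnorm r hr.1).trans_le (min_le_right _ _)
  · refine ((integrableOn_Ioi_rpow_of_lt hβ zero_lt_one).const_mul c).mono' hmeas.restrict ?_
    filter_upwards [ae_restrict_mem measurableSet_Ioi] with r hr
    exact (hnorm r (mem_Ioi.2 (zero_lt_one.trans hr))).trans_le (min_le_left _ _)

section HaarMeasure

variable {E : Type*} [NormedAddCommGroup E] [NormedSpace ℝ E] [FiniteDimensional ℝ E]
  [MeasurableSpace E] [BorelSpace E] (μ : Measure E) [μ.IsAddHaarMeasure]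

theorem integrable_min_rpow_div_rpow {c α s : ℝ} (hc : 0 ≤ c) (hs : 0 < s) (hsα : s < α) :
    Integrable (fun z : E => min c (‖z‖ ^ α) / ‖z‖ ^ ((finrank ℝ E : ℝ) + s)) μ := by
  rcases subsingleton_or_nontrivial E with hE | hE
  -- on the zero space the kernel is `min c 0 / 0 = 0`
  · refine (integrable_zero E ℝ μ).congr (ae_of_all _ fun z => ?_)
    simp [Subsingleton.elim z 0, zero_rpow (by positivity : (finrank ℝ E : ℝ) + s ≠ 0)]
  have hd : 1 ≤ finrank ℝ E := finrank_pos
  refine (integrable_fun_norm_addHaar μ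
    (f := fun r => min c (r ^ α) / r ^ ((finrank ℝ E : ℝ) + s))).2 <|
    (integrableOn_Ioi_min_mul_rpow_rpow hc (β := -s - 1) (γ := -s - 1 + α) (by linarith)
      (by linarith)).congr_fun (fun r (hr : 0 < r) => ?_) measurableSet_Ioi
  have hpow : r ^ (finrank ℝ E - 1) / r ^ ((finrank ℝ E : ℝ) + s) = r ^ (-s - 1) := by
    rw [← rpow_natCast, ← rpow_sub hr, Nat.cast_sub hd]
    congr 1; push_cast; ring
  rw [smul_eq_mul, ← mul_div_assoc, mul_div_right_comm, hpow,
    mul_min_of_nonneg _ _ (by positivity), mul_comm _ c, ← rpow_add hr]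

theorem integral_min_rpow_div_rpow_scale {α s r : ℝ} (hr : 0 < r) :
    ∫ z : E, min (r ^ α) (‖z‖ ^ α) / ‖z‖ ^ ((finrank ℝ E : ℝ) + s) ∂μ =
      r ^ (α - s) * ∫ z : E, min 1 (‖z‖ ^ α) / ‖z‖ ^ ((finrank ℝ E : ℝ) + s) ∂μ := by
  have hcomp := μ.integral_comp_smul_of_nonneg
    (fun z : E => min (r ^ α) (‖z‖ ^ α) / ‖z‖ ^ ((finrank ℝ E : ℝ) + s)) r (hR := hr.le)
  have hscale (z : E) : min (r ^ α) (‖r • z‖ ^ α) / ‖r • z‖ ^ ((finrank ℝ E : ℝ) + s) =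
      r ^ (α - (finrank ℝ E + s)) * (min 1 (‖z‖ ^ α) / ‖z‖ ^ ((finrank ℝ E : ℝ) + s)) := by
    have hmin : min (r ^ α) (r ^ α * ‖z‖ ^ α) = r ^ α * min 1 (‖z‖ ^ α) := by
      rw [mul_min_of_nonneg _ _ (by positivity), mul_one]
    rw [norm_smul, norm_of_nonneg hr.le, mul_rpow hr.le (norm_nonneg _),
      mul_rpow hr.le (norm_nonneg _), hmin, rpow_sub hr]
    field_simp
  simp only [hscale, integral_const_mul, smul_eq_mul] at hcomp
  rw [eq_inv_mul_iff_mul_eq₀ (by positivity)] at hcomp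
  rw [← hcomp, ← mul_assoc, ← rpow_natCast, ← rpow_add hr]
  ring_nf

end HaarMeasure

section Holder

variable {E : Type*} [NormedAddCommGroup E] {u : E → ℝ} {B H α : ℝ}

-- `|H|`: the Hölder bound forces `0 ≤ H` only if `E` has two distinct points.
lemma abs_sub_le_mul_min_of_holder (hB : ∀ x, |u x| ≤ B)
    (hH : ∀ x y, |u x - u y| ≤ H * ‖x - y‖ ^ α) (x y : E) :
    |u x - u y| ≤ (2 * B + |H|) * min 1 (‖x - y‖ ^ α) := by
  have hB0 : 0 ≤ B := (abs_nonneg _).trans (hB x)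
  rw [mul_min_of_nonneg _ _ (by positivity), mul_one]
  refine le_min ((abs_sub _ _).trans (by linarith [hB x, hB y, abs_nonneg H])) ?_
  refine (hH x y).trans (mul_le_mul_of_nonneg_right ?_ (by positivity))
  linarith [le_abs_self H]

lemma nonneg_of_holder (hH : ∀ x y, |u x - u y| ≤ H * ‖x - y‖ ^ α) {x y : E} (hxy : x ≠ y) :
    0 ≤ H := by
  have hr : 0 < ‖x - y‖ ^ α := rpow_pos_of_pos (norm_pos_iff.2 (sub_ne_zero.2 hxy)) α
  exact nonneg_of_mul_nonneg_left ((abs_nonneg _).trans (hH x y)) hr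

lemma abs_sub_sub_sub_le_of_holder (hH0 : 0 ≤ H)
    (hH : ∀ x y, |u x - u y| ≤ H * ‖x - y‖ ^ α) (x y z : E) :
    |(u x - u (x - z)) - (u y - u (y - z))| ≤ 2 * H * min (‖x - y‖ ^ α) (‖z‖ ^ α) := by
  rw [mul_min_of_nonneg _ _ (by positivity)]
  refine le_min ?_ ?_
  · have hshift := hH (x - z) (y - z)
    rw [sub_sub_sub_cancel_right] at hshift
    calc |(u x - u (x - z)) - (u y - u (y - z))|
        = |(u x - u y) - (u (x - z) - u (y - z))| := by ring_nf
      _ ≤ |u x - u y| + |u (x - z) - u (y - z)| := abs_sub _ _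
      _ ≤ 2 * H * ‖x - y‖ ^ α := by linarith [hH x y]
  · have hx := hH x (x - z)
    have hy := hH y (y - z)
    rw [sub_sub_cancel] at hx hy
    linarith [abs_sub (u x - u (x - z)) (u y - u (y - z))]

end Holder

section SingularIntegral

variable {E : Type*} [NormedAddCommGroup E] [NormedSpace ℝ E] [FiniteDimensional ℝ E]
  [MeasurableSpace E] [BorelSpace E] (μ : Measure E) [μ.IsAddHaarMeasure]
  {u : E → ℝ} {B H α s : ℝ}

theorem integrable_sub_div_norm_rpow (hu : Continuous u) (hB : ∀ x, |u x| ≤ B)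
    (hH : ∀ x y, |u x - u y| ≤ H * ‖x - y‖ ^ α) (hs : 0 < s) (hsα : s < α) (x : E) :
    Integrable (fun y => (u x - u y) / ‖x - y‖ ^ ((finrank ℝ E : ℝ) + s)) μ := by
  have hB0 : 0 ≤ B := (abs_nonneg _).trans (hB x)
  refine (((integrable_min_rpow_div_rpow μ zero_le_one hs hsα).comp_sub_left x).const_mul
    (2 * B + |H|)).mono'
    ((continuous_const.sub hu).measurable.div (by fun_prop)).aestronglyMeasurable
    (ae_of_all _ fun y => ?_)
  rw [norm_eq_abs, abs_div, abs_of_nonneg (rpow_nonneg (norm_nonneg _) _), mul_div_assoc']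
  exact div_le_div_of_nonneg_right (abs_sub_le_mul_min_of_holder hB hH x y) (by positivity)

theorem integral_sub_div_norm_rpow_eq (u : E → ℝ) (p : ℝ) (x : E) :
    ∫ y, (u x - u y) / ‖x - y‖ ^ p ∂μ = ∫ z, (u x - u (x - z)) / ‖z‖ ^ p ∂μ := by
  rw [← integral_sub_left_eq_self _ μ x]
  simp only [sub_sub_cancel]

theorem abs_integral_sub_div_norm_rpow_sub_le (hu : Continuous u) (hB : ∀ x, |u x| ≤ B)
    (hH : ∀ x y, |u x - u y| ≤ H * ‖x - y‖ ^ α) (hH0 : 0 ≤ H) (hs : 0 < s) (hsα : s < α)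
    (x y : E) :
    |∫ w, (u x - u w) / ‖x - w‖ ^ ((finrank ℝ E : ℝ) + s) ∂μ -
        ∫ w, (u y - u w) / ‖y - w‖ ^ ((finrank ℝ E : ℝ) + s) ∂μ| ≤
      2 * H * (∫ z, min 1 (‖z‖ ^ α) / ‖z‖ ^ ((finrank ℝ E : ℝ) + s) ∂μ) *
        ‖x - y‖ ^ (α - s) := by
  rcases eq_or_ne x y with rfl | hxy
  · simp [zero_rpow (sub_pos.2 hsα).ne']
  have hr : 0 < ‖x - y‖ := norm_pos_iff.2 (sub_ne_zero.2 hxy)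
  have hrecentred (x : E) :
      Integrable (fun z => (u x - u (x - z)) / ‖z‖ ^ ((finrank ℝ E : ℝ) + s)) μ := by
    simpa using (integrable_sub_div_norm_rpow μ hu hB hH hs hsα x).comp_sub_left x
  rw [integral_sub_div_norm_rpow_eq μ, integral_sub_div_norm_rpow_eq μ,
    ← integral_sub (hrecentred x) (hrecentred y), ← norm_eq_abs]
  have hdom := (integrable_min_rpow_div_rpow μ (rpow_nonneg hr.le α) hs hsα).const_mul (2 * H)
  calc _ ≤ ∫ z, 2 * H * (min (‖x - y‖ ^ α) (‖z‖ ^ α) / ‖z‖ ^ ((finrank ℝ E : ℝ) + s)) ∂μ := by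
        refine norm_integral_le_of_norm_le hdom (ae_of_all _ fun z => ?_)
        rw [← sub_div, norm_eq_abs, abs_div, abs_of_nonneg (rpow_nonneg (norm_nonneg _) _),
          mul_div_assoc']
        exact div_le_div_of_nonneg_right (abs_sub_sub_sub_le_of_holder hH0 hH x y z)
          (by positivity)
    _ = _ := by
        rw [integral_const_mul, integral_min_rpow_div_rpow_scale μ hr]
        ring

end SingularIntegral

theorem frac_lap_holder_Rn_general (n : ℕ) (σ α : ℝ)
    (hσ : 0 < σ) (hα : 2 * σ < α) :
    ∃ C : ℝ, 0 < C ∧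
      ∀ (u : EuclideanSpace ℝ (Fin n) → ℝ) (B H : ℝ),
        Continuous u →
        (∀ x, |u x| ≤ B) →
        (∀ x y, |u x - u y| ≤ H * ‖x - y‖ ^ α) →
        (∀ x : EuclideanSpace ℝ (Fin n),
          Integrable fun y => (u x - u y) / ‖x - y‖ ^ ((n : ℝ) + 2 * σ)) ∧
        (∀ x y : EuclideanSpace ℝ (Fin n),
          |(∫ w, (u x - u w) / ‖x - w‖ ^ ((n : ℝ) + 2 * σ)) -
            ∫ w, (u y - u w) / ‖y - w‖ ^ ((n : ℝ) + 2 * σ)| ≤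
          C * (B + H) * ‖x - y‖ ^ (α - 2 * σ)) := by
  have h2σ : 0 < 2 * σ := by positivity
  set I := ∫ z : EuclideanSpace ℝ (Fin n), min 1 (‖z‖ ^ α) / ‖z‖ ^ ((n : ℝ) + 2 * σ)
  have hI : 0 ≤ I := integral_nonneg fun z => by positivity
  refine ⟨2 * I + 1, by positivity, fun u B H hu hB hH => ⟨fun x => ?_, fun x y => ?_⟩⟩
  · simpa only [finrank_euclideanSpace_fin] using
      integrable_sub_div_norm_rpow volume hu hB hH h2σ hα x
  rcases eq_or_ne x y with rfl | hxy
  · simp [zero_rpow (sub_pos.2 hα).ne']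
  have hH0 : 0 ≤ H := nonneg_of_holder hH hxy
  have hB0 : 0 ≤ B := (abs_nonneg _).trans (hB x)
  calc _ ≤ 2 * H * I * ‖x - y‖ ^ (α - 2 * σ) := by
        simpa only [finrank_euclideanSpace_fin] using
          abs_integral_sub_div_norm_rpow_sub_le volume hu hB hH hH0 h2σ hα x y
    _ ≤ (2 * I + 1) * (B + H) * ‖x - y‖ ^ (α - 2 * σ) := by
        refine mul_le_mul_of_nonneg_right ?_ (by positivity)
        nlinarith [mul_nonneg hI hB0]

/-- for `0 < σ < 1/2` and `2σ < α ≤ 1` there is a constant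
`C = C(n,σ,α) > 0` such that for every bounded `α`-Hölder function `u : ℝⁿ → ℝ`
(with sup bound `B` and Hölder seminorm bound `H`), the singular integral
`x ↦ ∫_{ℝⁿ} (u(x)-u(y))/|x-y|^{n+2σ} dy` is absolutely convergent at every `x` and is
`(α-2σ)`-Hölder continuous with seminorm at most `C (B + H)`. -/
theorem frac_lap_holder_Rn (n : ℕ) (hn : 1 ≤ n) (σ α : ℝ)
    (hσ : 0 < σ) (hσ' : σ < 1 / 2) (hα : 2 * σ < α) (hα1 : α ≤ 1) :
    ∃ C : ℝ, 0 < C ∧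
      ∀ (u : EuclideanSpace ℝ (Fin n) → ℝ) (B H : ℝ),
        Continuous u →
        (∀ x, |u x| ≤ B) →
        (∀ x y, |u x - u y| ≤ H * ‖x - y‖ ^ α) →
        (∀ x : EuclideanSpace ℝ (Fin n),
          Integrable fun y => (u x - u y) / ‖x - y‖ ^ ((n : ℝ) + 2 * σ)) ∧
        (∀ x y : EuclideanSpace ℝ (Fin n),
          |(∫ w, (u x - u w) / ‖x - w‖ ^ ((n : ℝ) + 2 * σ)) -
            ∫ w, (u y - u w) / ‖y - w‖ ^ ((n : ℝ) + 2 * σ)| ≤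
          C * (B + H) * ‖x - y‖ ^ (α - 2 * σ)) :=
  frac_lap_holder_Rn_general n σ α hσ hα
end
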